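/- For any finite field F with q elements, any ε ∈ (0,1), any n, d, and any ℓ ≥ 9(n² ln q + 1)/(ln(1+ε))², the value of the level-ℓ linear-code Krawtchouk LP satisfies val(KrawtchoukLP^F_Lin(n,d,ℓ))^{1/ℓ} ≤ (1+ε) · A^Lin_q(n,d). In particular (since linear code sizes are powers of q), taking ℓ > 9(n² ln q + 1)/(ln q)², one recovers A^Lin_q(n,d) = q^{⌊(log_q val)/ℓ⌋}. -/

import Mathlib

open Finset

/-- `A_q^Lin(n,d)`: the maximum size of an `F`-linear code in `Fⁿ` of minimum distance at
least `d`. -/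
noncomputable def ALinF (F : Type*) [Field F] [Fintype F] [DecidableEq F] (n d : ℕ) : ℕ :=
  sSup {m : ℕ | ∃ C : Submodule F (Fin n → F),
    (∀ x ∈ C, ∀ y ∈ C, x ≠ y → d ≤ hammingDist x y) ∧ Nat.card C = m}

/-- The modified Lovász theta function `ϑ'` of a graph given by an adjacency predicate. -/
noncomputable def thetaPrime (V : Type*) [Fintype V] (Adj : V → V → Prop) : ℝ :=
  sSup {t : ℝ | ∃ M : Matrix V V ℝ, M.PosSemidef ∧ Matrix.trace M = 1 ∧
    (∀ u v, Adj u v → M u v = 0) ∧ (∀ u v, 0 ≤ M u v) ∧ t = ∑ u : V, ∑ v : V, M u v}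

/-- The value of the level-`ℓ` Krawtchouk LP for `F`-linear codes, which (by Schrijver's
theorem) equals `ϑ'` of the exclusion graph on `(Fⁿ)^ℓ` in which `x ∼ y` iff some `F`-linear
combination of the differences `x_i − y_i` has Hamming weight in `{1, …, d−1}`. -/
noncomputable def krawtchoukLPLinValF (F : Type*) [Field F] [Fintype F] [DecidableEq F]
    (n d ℓ : ℕ) : ℝ :=
  thetaPrime (Fin ℓ → (Fin n → F))
    (fun x y => x ≠ y ∧ ∃ k : Fin ℓ → F,
      1 ≤ hammingNorm (∑ i : Fin ℓ, k i • (x i - y i)) ∧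
        hammingNorm (∑ i : Fin ℓ, k i • (x i - y i)) ≤ d - 1)

open scoped Classical

set_option linter.unusedSectionVars false
set_option maxHeartbeats 1000000

namespace KrawAux

variable {F : Type*} [Field F] [Fintype F] [DecidableEq F] {n d ℓ : ℕ}

/-- The minimum-distance condition for a linear code, in Hamming-norm form. -/
def IsCode (F : Type*) [Field F] [Fintype F] [DecidableEq F] (n d : ℕ)
    (C : Submodule F (Fin n → F)) : Prop :=
  ∀ x ∈ C, x ≠ 0 → d ≤ hammingNorm x

/-- Tuples all of whose `F`-linear combinations have weight `0` or at least `d`. -/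
def Good (F : Type*) [Field F] [Fintype F] [DecidableEq F] (n d ℓ : ℕ)
    (z : Fin ℓ → Fin n → F) : Prop :=
  ∀ k : Fin ℓ → F, hammingNorm (∑ i, k i • z i) = 0 ∨ d ≤ hammingNorm (∑ i, k i • z i)

lemma bddAbove_ALinF_set :
    BddAbove {m : ℕ | ∃ C : Submodule F (Fin n → F),
      (∀ x ∈ C, ∀ y ∈ C, x ≠ y → d ≤ hammingDist x y) ∧ Nat.card C = m} := by
  refine ⟨Nat.card (Fin n → F), ?_⟩
  rintro m ⟨C, -, rfl⟩
  exact Nat.card_le_card_of_injective _ Subtype.val_injective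

lemma isCode_pairs {C : Submodule F (Fin n → F)} (hC : IsCode F n d C) :
    ∀ x ∈ C, ∀ y ∈ C, x ≠ y → d ≤ hammingDist x y := by
  intro x hx y hy hxy
  rw [hammingDist_eq_hammingNorm]
  exact hC _ (C.add_mem (C.neg_mem hx) hy) (fun h => hxy (neg_add_eq_zero.mp h))

lemma pairs_isCode {C : Submodule F (Fin n → F)}
    (hC : ∀ x ∈ C, ∀ y ∈ C, x ≠ y → d ≤ hammingDist x y) : IsCode F n d C := by
  intro x hx hx0
  have := hC x hx 0 C.zero_mem hx0
  rwa [hammingDist_zero_right] at this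

lemma card_le_A {C : Submodule F (Fin n → F)} (hC : IsCode F n d C) :
    Nat.card C ≤ ALinF F n d :=
  le_csSup bddAbove_ALinF_set ⟨C, isCode_pairs hC, rfl⟩

lemma bot_isCode : IsCode F n d (⊥ : Submodule F (Fin n → F)) := by
  intro x hx hx0
  exact absurd ((Submodule.mem_bot F).mp hx) hx0

lemma card_bot : Nat.card (⊥ : Submodule F (Fin n → F)) = 1 := by
  rw [Nat.card_eq_fintype_card,
    Fintype.card_eq_one_iff_nonempty_unique.mpr ⟨Submodule.uniqueBot⟩]

lemma one_le_A : 1 ≤ ALinF F n d := by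
  have h := card_le_A (bot_isCode (F := F) (n := n) (d := d))
  rwa [card_bot] at h

lemma card_tuples (C : Submodule F (Fin n → F)) :
    (univ.filter (fun z : Fin ℓ → Fin n → F => ∀ i, z i ∈ C)).card = Nat.card C ^ ℓ := by
  rw [← Fintype.card_subtype, Nat.card_eq_fintype_card]
  rw [Fintype.card_congr (Equiv.subtypePiEquivPi (p := fun _ (x : Fin n → F) => x ∈ C))]
  simp [Fintype.card_pi]

lemma exists_gen (C : Submodule F (Fin n → F)) :
    ∃ g : Fin n → (Fin n → F), Submodule.span F (Set.range g) = C := by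
  have hm : Module.finrank F C ≤ n := by
    have h := Submodule.finrank_le C
    rwa [Module.finrank_fin_fun] at h
  set m := Module.finrank F C with hmdef
  let b := Module.finBasis F C
  refine ⟨fun i => if h : (i : ℕ) < m then (b ⟨i, h⟩ : Fin n → F) else 0, le_antisymm ?_ ?_⟩
  · rw [Submodule.span_le]
    rintro x ⟨i, rfl⟩
    dsimp only
    split
    · exact (b _).2
    · exact C.zero_mem
  · intro x hx
    have hx' : x ∈ Submodule.map C.subtype ⊤ := by
      rw [Submodule.map_subtype_top]; exact hx
    rw [← b.span_eq, Submodule.map_span] at hx'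
    refine Submodule.span_le.mpr ?_ hx'
    rintro y ⟨-, ⟨j, rfl⟩, rfl⟩
    apply Submodule.subset_span
    refine ⟨Fin.castLE hm j, ?_⟩
    have hj : ((Fin.castLE hm j : Fin n) : ℕ) < m := j.isLt
    simp only [hj, dif_pos]
    rfl

lemma not_good_iff (z : Fin ℓ → Fin n → F) :
    (¬ Good F n d ℓ z) ↔ ∃ k : Fin ℓ → F,
      1 ≤ hammingNorm (∑ i, k i • z i) ∧ hammingNorm (∑ i, k i • z i) ≤ d - 1 := by
  unfold Good
  push_neg
  exact exists_congr fun k => by omega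

lemma good_span {z : Fin ℓ → Fin n → F} (hz : Good F n d ℓ z) :
    IsCode F n d (Submodule.span F (Set.range z)) := by
  intro x hx hx0
  rw [Submodule.mem_span_range_iff_exists_fun] at hx
  obtain ⟨c, rfl⟩ := hx
  rcases hz c with h | h
  · exact absurd (hammingNorm_eq_zero.mp h) hx0
  · exact h

lemma goodCard_le :
    (univ.filter (Good F n d ℓ)).card ≤ Fintype.card F ^ (n * n) * ALinF F n d ^ ℓ := by
  let ψ : (Fin ℓ → Fin n → F) → (Fin n → (Fin n → F)) := fun z =>
    Classical.choose (exists_gen (Submodule.span F (Set.range z)))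
  have hψ : ∀ z : Fin ℓ → Fin n → F,
      Submodule.span F (Set.range (ψ z)) = Submodule.span F (Set.range z) :=
    fun z => Classical.choose_spec (exists_gen (Submodule.span F (Set.range z)))
  rw [Finset.card_eq_sum_card_fiberwise (f := ψ) (t := univ) (fun x _ => mem_univ _)]
  have hbound : ∀ G ∈ (univ : Finset (Fin n → (Fin n → F))),
      ((univ.filter (Good F n d ℓ)).filter (fun z => ψ z = G)).card ≤ ALinF F n d ^ ℓ := by
    intro G _
    rcases ((univ.filter (Good F n d ℓ)).filter (fun z => ψ z = G)).eq_empty_or_nonempty with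
      he | ⟨z₀, hz₀⟩
    · simp [he, Nat.zero_le]
    · simp only [mem_filter, mem_univ, true_and] at hz₀
      obtain ⟨hgood₀, hψ₀⟩ := hz₀
      set C : Submodule F (Fin n → F) := Submodule.span F (Set.range G) with hCdef
      have hCz₀ : C = Submodule.span F (Set.range z₀) := by rw [hCdef, ← hψ₀, hψ z₀]
      have hcode : IsCode F n d C := hCz₀ ▸ good_span hgood₀
      have hsub : ((univ.filter (Good F n d ℓ)).filter (fun z => ψ z = G)) ⊆
          (univ.filter (fun z : Fin ℓ → Fin n → F => ∀ i, z i ∈ C)) := by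
        intro z hz
        simp only [mem_filter, mem_univ, true_and] at hz ⊢
        obtain ⟨-, hzG⟩ := hz
        intro i
        have : Submodule.span F (Set.range z) = C := by rw [hCdef, ← hzG, hψ z]
        rw [← this]
        exact Submodule.subset_span (Set.mem_range_self i)
      calc ((univ.filter (Good F n d ℓ)).filter (fun z => ψ z = G)).card
          ≤ (univ.filter (fun z : Fin ℓ → Fin n → F => ∀ i, z i ∈ C)).card :=
            Finset.card_le_card hsub
        _ = Nat.card C ^ ℓ := card_tuples C
        _ ≤ ALinF F n d ^ ℓ := Nat.pow_le_pow_left (card_le_A hcode) ℓ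
  calc ∑ G : Fin n → (Fin n → F),
        ((univ.filter (Good F n d ℓ)).filter (fun z => ψ z = G)).card
      ≤ ∑ _G : Fin n → (Fin n → F), ALinF F n d ^ ℓ := Finset.sum_le_sum hbound
    _ = Fintype.card F ^ (n * n) * ALinF F n d ^ ℓ := by
        rw [Finset.sum_const, card_univ, smul_eq_mul]
        congr 1
        simp [Fintype.card_fun, ← pow_mul]

lemma psd_entry_le {V : Type*} [Fintype V] [DecidableEq V] {M : Matrix V V ℝ}
    (hM : M.PosSemidef) (u v : V) : M u v ≤ (M u u + M v v) / 2 := by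
  have h := hM.dotProduct_mulVec_nonneg (Pi.single u 1 - Pi.single v 1)
  have hsym : M v u = M u v := by
    conv_lhs => rw [← hM.1]
    simp [Matrix.conjTranspose_apply]
  rw [star_trivial, Matrix.mulVec_sub, dotProduct_sub, sub_dotProduct,
    sub_dotProduct] at h
  simp only [Matrix.mulVec_single, single_dotProduct, mul_one, one_mul, MulOpposite.op_one,
    one_smul, Matrix.col_apply] at h
  linarith

lemma sum_le_goodCard (M : Matrix (Fin ℓ → Fin n → F) (Fin ℓ → Fin n → F) ℝ)
    (hpsd : M.PosSemidef) (htr : Matrix.trace M = 1)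
    (hzero : ∀ u v : Fin ℓ → Fin n → F, (u ≠ v ∧ ∃ k : Fin ℓ → F,
        1 ≤ hammingNorm (∑ i, k i • (u i - v i)) ∧
        hammingNorm (∑ i, k i • (u i - v i)) ≤ d - 1) → M u v = 0) :
    ∑ u, ∑ v, M u v ≤ ((univ.filter (Good F n d ℓ)).card : ℝ) := by
  have htr' : ∑ u, M u u = 1 := by simpa [Matrix.trace, Matrix.diag] using htr
  have hre : ∑ u, ∑ v, M u v = ∑ z, ∑ u, M u (u + z) := by
    have h1 : ∑ u, ∑ v, M u v = ∑ u, ∑ z, M u (u + z) :=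
      Finset.sum_congr rfl fun u _ =>
        (Fintype.sum_equiv (Equiv.addLeft u) (fun z => M u (u + z)) (fun v => M u v)
          (fun z => rfl)).symm
    rw [h1, Finset.sum_comm]
  rw [hre]
  have hterm : ∀ z : Fin ℓ → Fin n → F,
      ∑ u, M u (u + z) ≤ if Good F n d ℓ z then (1 : ℝ) else 0 := by
    intro z
    by_cases hg : Good F n d ℓ z
    · rw [if_pos hg]
      calc ∑ u, M u (u + z) ≤ ∑ u, (M u u + M (u + z) (u + z)) / 2 :=
            Finset.sum_le_sum fun u _ => psd_entry_le hpsd u (u + z)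
        _ = (∑ u, M u u + ∑ u, M (u + z) (u + z)) / 2 := by
            rw [← Finset.sum_add_distrib, ← Finset.sum_div]
        _ = 1 := by
            rw [htr', Fintype.sum_equiv (Equiv.addRight z) (fun u => M (u + z) (u + z))
              (fun w => M w w) (fun u => rfl), htr']
            norm_num
    · rw [if_neg hg]
      obtain ⟨k, h1, h2⟩ := (not_good_iff z).mp hg
      have hz0 : z ≠ 0 := by
        rintro rfl
        simp at h1
      have hM0 : ∀ u : Fin ℓ → Fin n → F, M u (u + z) = 0 := by
        intro u
        refine hzero u (u + z) ⟨?_, ⟨-k, ?_⟩⟩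
        · intro he
          exact hz0 (by simpa using he.symm)
        · have hexpr : ∑ i, (-k) i • (u i - (u + z) i) = ∑ i, k i • z i := by
            refine Finset.sum_congr rfl fun i _ => ?_
            have : u i - (u + z) i = -(z i) := by
              simp [Pi.add_apply]
            rw [this]
            simp
          rw [hexpr]
          exact ⟨h1, h2⟩
      simp [hM0]
  calc ∑ z, ∑ u, M u (u + z) ≤ ∑ z, if Good F n d ℓ z then (1 : ℝ) else 0 :=
        Finset.sum_le_sum fun z _ => hterm z
    _ = ((univ.filter (Good F n d ℓ)).card : ℝ) := by rw [Finset.sum_boole]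

lemma feasible_exists (C : Submodule F (Fin n → F))
    (hC : IsCode F n d C) :
    ∃ M : Matrix (Fin ℓ → Fin n → F) (Fin ℓ → Fin n → F) ℝ,
      M.PosSemidef ∧ Matrix.trace M = 1 ∧
      (∀ u v : Fin ℓ → Fin n → F, (u ≠ v ∧ ∃ k : Fin ℓ → F,
          1 ≤ hammingNorm (∑ i, k i • (u i - v i)) ∧
          hammingNorm (∑ i, k i • (u i - v i)) ≤ d - 1) → M u v = 0) ∧
      (∀ u v, 0 ≤ M u v) ∧
      ((Nat.card C ^ ℓ : ℕ) : ℝ) = ∑ u, ∑ v, M u v := by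
  set S : Finset (Fin ℓ → Fin n → F) := univ.filter (fun u => ∀ i, u i ∈ C) with hS
  set N : ℝ := (S.card : ℝ) with hNdef
  have hScard : S.card = Nat.card C ^ ℓ := card_tuples C
  have hS0 : (0 : Fin ℓ → Fin n → F) ∈ S := by
    simp only [hS, mem_filter, mem_univ, true_and]
    intro i
    exact C.zero_mem
  have hNpos : 0 < N := by
    have h : 0 < S.card := Finset.card_pos.mpr ⟨0, hS0⟩
    rw [hNdef]
    exact_mod_cast h
  set w : (Fin ℓ → Fin n → F) → ℝ := fun u => if u ∈ S then 1 else 0 with hw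
  have hwnn : ∀ u, 0 ≤ w u := fun u => by simp only [hw]; split <;> norm_num
  have hww : ∀ u, w u * w u = w u := fun u => by simp only [hw]; split <;> norm_num
  have hsumw : ∑ u, w u = N := by
    simp only [hw, hNdef]
    rw [Finset.sum_ite_mem, Finset.univ_inter, Finset.sum_const, nsmul_eq_mul, mul_one]
  set M : Matrix (Fin ℓ → Fin n → F) (Fin ℓ → Fin n → F) ℝ :=
    Matrix.of (fun u v => N⁻¹ * (w u * w v)) with hM
  have hMapp : ∀ u v, M u v = N⁻¹ * (w u * w v) := fun u v => rfl
  have hsum2 : ∀ x : (Fin ℓ → Fin n → F) → ℝ,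
      ∑ u, x u * ∑ v, (N⁻¹ * (w u * w v)) * x v
        = N⁻¹ * ((∑ u, w u * x u) * (∑ v, w v * x v)) := by
    intro x
    rw [Finset.sum_mul_sum, Finset.mul_sum]
    refine Finset.sum_congr rfl fun u _ => ?_
    rw [Finset.mul_sum, Finset.mul_sum]
    refine Finset.sum_congr rfl fun v _ => ?_
    ring
  refine ⟨M, Matrix.PosSemidef.of_dotProduct_mulVec_nonneg ?_ ?_, ?_, ?_, ?_, ?_⟩
  · ext u v
    simp only [Matrix.conjTranspose_apply, hMapp, star_trivial]
    ring
  · intro x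
    have hq : dotProduct (star x) (M.mulVec x)
        = N⁻¹ * ((∑ u, w u * x u) * (∑ v, w v * x v)) := by
      rw [star_trivial]
      simpa only [dotProduct, Matrix.mulVec, hMapp] using hsum2 x
    rw [hq]
    have : (∑ v, w v * x v) = (∑ u, w u * x u) := rfl
    rw [this, ← pow_two]
    positivity
  · have : Matrix.trace M = ∑ u, N⁻¹ * w u := by
      simp only [Matrix.trace, Matrix.diag, hMapp, hww]
    rw [this, ← Finset.mul_sum, hsumw, inv_mul_cancel₀ (ne_of_gt hNpos)]
  · rintro u v ⟨huv, k, h1, h2⟩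
    by_cases hu : u ∈ S
    · by_cases hv : v ∈ S
      · exfalso
        simp only [hS, mem_filter, mem_univ, true_and] at hu hv
        set e : Fin n → F := ∑ i, k i • (u i - v i) with he
        have heC : e ∈ C :=
          Submodule.sum_mem C fun i _ => C.smul_mem _ (C.sub_mem (hu i) (hv i))
        have he0 : e ≠ 0 := by
          intro h0
          rw [h0] at h1
          simp at h1
        have := hC e heC he0
        omega
      · simp [hMapp, hw, hv]
    · simp [hMapp, hw, hu]
  · intro u v
    rw [hMapp]
    have := hwnn u
    have := hwnn v
    positivity
  · have hval : ∑ u, ∑ v, M u v = N⁻¹ * ((∑ u, w u) * (∑ v, w v)) := by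
      have := hsum2 (fun _ => 1)
      simpa only [mul_one, one_mul, hMapp] using this
    rw [hval, hsumw, ← hScard]
    field_simp
    exact hNdef.symm

end KrawAux

open KrawAux in
/-- Completeness of the linear-code Krawtchouk hierarchy: for a finite field `F` with `q`
elements, `ε ∈ (0,1)` and `ℓ ≥ 9(n² ln q + 1)/(ln(1+ε))²`, the LP value satisfies
`val(KrawtchoukLP^F_Lin(n,d,ℓ))^{1/ℓ} ≤ (1+ε) · A_q^Lin(n,d)`. In particular (since linear
code sizes are powers of `q`), if moreover `ℓ > 9(n² ln q + 1)/(ln q)²`, then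
`A_q^Lin(n,d) = q^{⌊(log_q val)/ℓ⌋}`. -/
theorem krawtchoukLPLin_complete (F : Type*) [Field F] [Fintype F] [DecidableEq F]
    (n d ℓ : ℕ) (ε : ℝ) (hε : ε ∈ Set.Ioo (0 : ℝ) 1)
    (hℓ : 9 * ((n : ℝ) ^ 2 * Real.log (Fintype.card F) + 1) /
        (Real.log (1 + ε)) ^ 2 ≤ (ℓ : ℝ)) :
    (krawtchoukLPLinValF F n d ℓ) ^ ((1 : ℝ) / (ℓ : ℝ)) ≤
        (1 + ε) * (ALinF F n d : ℝ) ∧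
      (9 * ((n : ℝ) ^ 2 * Real.log (Fintype.card F) + 1) /
          (Real.log (Fintype.card F)) ^ 2 < (ℓ : ℝ) →
        (ALinF F n d : ℝ) =
          (Fintype.card F : ℝ) ^
            (⌊Real.logb (Fintype.card F) (krawtchoukLPLinValF F n d ℓ) / (ℓ : ℝ)⌋)) := by
  obtain ⟨hε0, hε1⟩ := hε
  set q : ℕ := Fintype.card F with hqdef
  have hq2 : 2 ≤ q := Fintype.one_lt_card
  have hqR : (2 : ℝ) ≤ (q : ℝ) := by exact_mod_cast hq2
  have hqpos : (0 : ℝ) < (q : ℝ) := by linarith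
  have hlogq : (0 : ℝ) ≤ Real.log q := Real.log_nonneg (by linarith)
  set δ : ℝ := Real.log (1 + ε) with hδdef
  have hδpos : 0 < δ := Real.log_pos (by linarith)
  have hδ1 : δ < 1 := by
    have h2 : Real.log (1 + ε) < Real.log 2 := Real.log_lt_log (by linarith) (by linarith)
    have := Real.log_two_lt_d9
    rw [hδdef]
    linarith
  set X : ℝ := (n : ℝ) ^ 2 * Real.log q + 1 with hXdef
  have hX1 : 1 ≤ X := by
    have : (0 : ℝ) ≤ (n : ℝ) ^ 2 * Real.log q := by positivity
    rw [hXdef]; linarith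
  have hl9 : 9 * X ≤ (ℓ : ℝ) * δ ^ 2 := by
    have := (div_le_iff₀ (pow_pos hδpos 2)).mp hℓ
    linarith
  have hlposR : (0 : ℝ) < (ℓ : ℝ) := by nlinarith [sq_nonneg δ]
  have hlne : (ℓ : ℝ) ≠ 0 := ne_of_gt hlposR
  have hchain : (n : ℝ) ^ 2 * Real.log q ≤ (ℓ : ℝ) * δ := by nlinarith
  set A : ℕ := ALinF F n d with hAdef
  have hA1 : 1 ≤ A := one_le_A
  have hA1R : (1 : ℝ) ≤ (A : ℝ) := by exact_mod_cast hA1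
  -- optimal code
  have hAmem : A ∈ {m : ℕ | ∃ C : Submodule F (Fin n → F),
      (∀ x ∈ C, ∀ y ∈ C, x ≠ y → d ≤ hammingDist x y) ∧ Nat.card C = m} := by
    rw [hAdef]
    exact Nat.sSup_mem ⟨1, ⊥, isCode_pairs bot_isCode, card_bot⟩ bddAbove_ALinF_set
  obtain ⟨Copt, hCoptPairs, hCoptCard⟩ := hAmem
  have hCopt : IsCode F n d Copt := pairs_isCode hCoptPairs
  -- the theta set
  set KS : Set ℝ := {t : ℝ | ∃ M : Matrix (Fin ℓ → Fin n → F) (Fin ℓ → Fin n → F) ℝ,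
    M.PosSemidef ∧ Matrix.trace M = 1 ∧
    (∀ u v : Fin ℓ → Fin n → F, (u ≠ v ∧ ∃ k : Fin ℓ → F,
        1 ≤ hammingNorm (∑ i, k i • (u i - v i)) ∧
        hammingNorm (∑ i, k i • (u i - v i)) ≤ d - 1) → M u v = 0) ∧
    (∀ u v, 0 ≤ M u v) ∧ t = ∑ u, ∑ v, M u v} with hKSdef
  have hvaldef : krawtchoukLPLinValF F n d ℓ = sSup KS := rfl
  set v : ℝ := krawtchoukLPLinValF F n d ℓ with hvdef
  have hub : ∀ t ∈ KS, t ≤ ((univ.filter (Good F n d ℓ)).card : ℝ) := by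
    rintro t ⟨M, hpsd, htr, hz, hnn, rfl⟩
    exact sum_le_goodCard M hpsd htr hz
  have hbdd : BddAbove KS := ⟨_, hub⟩
  have hmem : ((A ^ ℓ : ℕ) : ℝ) ∈ KS := by
    obtain ⟨M, h1, h2, h3, h4, h5⟩ := feasible_exists (ℓ := ℓ) Copt hCopt
    rw [← hCoptCard]
    exact ⟨M, h1, h2, h3, h4, h5⟩
  have hlow : ((A ^ ℓ : ℕ) : ℝ) ≤ v := le_csSup hbdd hmem
  have hup : v ≤ ((q ^ (n * n) * A ^ ℓ : ℕ) : ℝ) := by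
    refine csSup_le ⟨_, hmem⟩ fun t ht => (hub t ht).trans ?_
    exact_mod_cast goodCard_le
  have hlowR : ((A : ℝ)) ^ ℓ ≤ v := by
    rw [← Nat.cast_pow]
    exact hlow
  have hupR : v ≤ (q : ℝ) ^ (n * n) * (A : ℝ) ^ ℓ := by
    push_cast at hup
    exact hup
  have hApow : (0 : ℝ) < (A : ℝ) ^ ℓ := by positivity
  have hvpos : 0 < v := lt_of_lt_of_le hApow hlowR
  -- part 1
  have hexp : (0 : ℝ) ≤ 1 / (ℓ : ℝ) := by positivity
  have hAℓ : ((A : ℝ) ^ ℓ) ^ ((1 : ℝ) / (ℓ : ℝ)) = (A : ℝ) := by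
    rw [← Real.rpow_natCast (A : ℝ) ℓ, ← Real.rpow_mul (by positivity),
      mul_one_div, div_self hlne, Real.rpow_one]
  have hqℓ : ((q : ℝ) ^ (n * n)) ^ ((1 : ℝ) / (ℓ : ℝ)) ≤ 1 + ε := by
    rw [← Real.rpow_natCast (q : ℝ) (n * n), ← Real.rpow_mul (le_of_lt hqpos),
      Real.rpow_def_of_pos hqpos, ← Real.exp_log (x := 1 + ε) (by linarith)]
    apply Real.exp_le_exp.mpr
    have hcast : ((n * n : ℕ) : ℝ) = (n : ℝ) ^ 2 := by push_cast; ring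
    have heq : Real.log q * (((n * n : ℕ) : ℝ) * (1 / (ℓ : ℝ)))
        = ((n : ℝ) ^ 2 * Real.log q) / (ℓ : ℝ) := by
      rw [hcast]; ring
    rw [heq, div_le_iff₀ hlposR, ← hδdef]
    nlinarith
  have part1 : v ^ ((1 : ℝ) / (ℓ : ℝ)) ≤ (1 + ε) * (A : ℝ) := by
    calc v ^ ((1 : ℝ) / (ℓ : ℝ))
        ≤ ((q : ℝ) ^ (n * n) * (A : ℝ) ^ ℓ) ^ ((1 : ℝ) / (ℓ : ℝ)) :=
          Real.rpow_le_rpow (le_of_lt hvpos) hupR hexp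
      _ = ((q : ℝ) ^ (n * n)) ^ ((1 : ℝ) / (ℓ : ℝ)) * ((A : ℝ) ^ ℓ) ^ ((1 : ℝ) / (ℓ : ℝ)) :=
          Real.mul_rpow (by positivity) (by positivity)
      _ ≤ (1 + ε) * (A : ℝ) := by
          rw [hAℓ]
          exact mul_le_mul_of_nonneg_right hqℓ (by positivity)
  refine ⟨part1, fun _ => ?_⟩
  -- part 2
  set k : ℕ := Module.finrank F Copt with hkdef
  have hAq : A = q ^ k := by
    rw [← hCoptCard, Nat.card_eq_fintype_card, Module.card_eq_pow_finrank (K := F)]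
  have hAqR : (A : ℝ) = (q : ℝ) ^ k := by rw [hAq]; push_cast; ring
  have hb : (1 : ℝ) < (q : ℝ) := by linarith
  have hvlow : (q : ℝ) ^ (k * ℓ) ≤ v := by
    rw [pow_mul, ← hAqR]
    exact hlowR
  have hvup : v < (q : ℝ) ^ ((k + 1) * ℓ) := by
    have hlid : v = (v ^ ((1 : ℝ) / (ℓ : ℝ))) ^ ℓ := by
      rw [← Real.rpow_natCast (v ^ ((1 : ℝ) / (ℓ : ℝ))) ℓ, ← Real.rpow_mul (le_of_lt hvpos),
        one_div_mul_cancel hlne, Real.rpow_one]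
    have hℓ0 : ℓ ≠ 0 := by
      intro h
      rw [h] at hlposR
      simp at hlposR
    have hstep : (v ^ ((1 : ℝ) / (ℓ : ℝ))) ^ ℓ ≤ ((1 + ε) * (A : ℝ)) ^ ℓ :=
      pow_le_pow_left₀ (Real.rpow_nonneg (le_of_lt hvpos) _) part1 ℓ
    have hstrict : ((1 + ε) * (A : ℝ)) ^ ℓ < ((q : ℝ) ^ (k + 1)) ^ ℓ := by
      apply pow_lt_pow_left₀ _ (by positivity) hℓ0
      rw [hAqR, pow_succ]
      calc (1 + ε) * (q : ℝ) ^ k < 2 * (q : ℝ) ^ k := by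
            have : (0:ℝ) < (q : ℝ) ^ k := by positivity
            nlinarith
        _ ≤ (q : ℝ) ^ k * (q : ℝ) := by nlinarith [pow_pos hqpos k]
    rw [hlid]
    calc (v ^ ((1 : ℝ) / (ℓ : ℝ))) ^ ℓ ≤ ((1 + ε) * (A : ℝ)) ^ ℓ := hstep
      _ < ((q : ℝ) ^ (k + 1)) ^ ℓ := hstrict
      _ = (q : ℝ) ^ ((k + 1) * ℓ) := by rw [← pow_mul]
  -- logb bounds
  have hlogb_pow : ∀ m : ℕ, Real.logb (q : ℝ) ((q : ℝ) ^ m) = (m : ℝ) := by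
    intro m
    rw [Real.logb_pow, Real.logb_self_eq_one hb, mul_one]
  have hkl1 : ((k * ℓ : ℕ) : ℝ) ≤ Real.logb (q : ℝ) v := by
    rw [← hlogb_pow (k * ℓ)]
    exact Real.logb_le_logb_of_le hb (pow_pos hqpos _) hvlow
  have hkl2 : Real.logb (q : ℝ) v < (((k + 1) * ℓ : ℕ) : ℝ) := by
    rw [← hlogb_pow ((k + 1) * ℓ)]
    exact Real.logb_lt_logb hb hvpos hvup
  have hfloor : ⌊Real.logb (q : ℝ) v / (ℓ : ℝ)⌋ = (k : ℤ) := by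
    rw [Int.floor_eq_iff]
    constructor
    · rw [le_div_iff₀ hlposR]
      push_cast at hkl1 ⊢
      linarith
    · rw [div_lt_iff₀ hlposR]
      push_cast at hkl2 ⊢
      linarith
  rw [hfloor, zpow_natCast, ← hAqR]
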